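/- Let 1 ≤ p ≤ q < ∞. The weak type discrete Morrey space wℓ^p_q is complete with respect to the quasi-norm ‖·‖_{wℓ^p_q}: every Cauchy sequence (x^{(n)})_{n∈ℕ} in wℓ^p_q (i.e., for every ε > 0 there is n_ε with ‖x^{(i)} − x^{(j)}‖_{wℓ^p_q} < ε for all i, j ≥ n_ε) converges in the quasi-norm ‖·‖_{wℓ^p_q} to some x ∈ wℓ^p_q. -/

import Mathlib

/-!
Coordinates are controlled by the norm (take `N = 0`), so a Cauchy sequence converges pointwise
to some `x`. The norm is lower semicontinuous under pointwise convergence, because each counting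
function `weakCard` can only grow in the limit; hence `‖X n - x‖ ≤ sup_{j ≥ n₀} ‖X n - X j‖`.
Membership of `x` then follows from the quasi-triangle inequality, which comes from
`(a + b) ^ (1 / p) ≤ a ^ (1 / p) + b ^ (1 / p)` for `p ≥ 1`.
-/

open scoped ENNReal NNReal BigOperators

/-- The discrete "ball" `S_{m,N} = {m-N, …, m+N}` as a finite set of integers. -/
noncomputable def S (m : ℤ) (N : ℕ) : Finset ℤ := Finset.Icc (m - N) (m + N)

open Classical in
/-- The cardinality of `{k ∈ S_{m,N} : |x_k| > γ}`. -/
noncomputable def weakCard (x : ℤ → ℂ) (m : ℤ) (N : ℕ) (γ : ℝ≥0) : ℕ :=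
  ((S m N).filter (fun k => γ < ‖x k‖₊)).card

/-- The weak type discrete Morrey norm `‖x‖_{wℓ^p_q}`. -/
noncomputable def wMorreyNorm (p q : ℝ) (x : ℤ → ℂ) : ℝ≥0∞ :=
  ⨆ (m : ℤ) (N : ℕ) (γ : ℝ≥0) (_ : 0 < γ),
    (2 * (N : ℝ≥0∞) + 1) ^ (1 / q - 1 / p) * (γ : ℝ≥0∞) *
      (weakCard x m N γ : ℝ≥0∞) ^ (1 / p)

open Filter Topology

noncomputable def wMorreyTerm (p q : ℝ) (x : ℤ → ℂ) (m : ℤ) (N : ℕ) (γ : ℝ≥0) : ℝ≥0∞ :=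
  (2 * (N : ℝ≥0∞) + 1) ^ (1 / q - 1 / p) * (γ : ℝ≥0∞) *
    (weakCard x m N γ : ℝ≥0∞) ^ (1 / p)

section WeakMorrey

variable {p q : ℝ}

theorem wMorreyTerm_le_wMorreyNorm (x : ℤ → ℂ) (m : ℤ) (N : ℕ) {γ : ℝ≥0} (hγ : 0 < γ) :
    wMorreyTerm p q x m N γ ≤ wMorreyNorm p q x :=
  le_iSup_of_le m <| le_iSup_of_le N <| le_iSup_of_le γ <| le_iSup_of_le hγ le_rfl

theorem wMorreyTerm_mono_of_weakCard_le (hp : 0 ≤ p) {x y : ℤ → ℂ} {m : ℤ} {N : ℕ} {γ : ℝ≥0}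
    (h : weakCard x m N γ ≤ weakCard y m N γ) :
    wMorreyTerm p q x m N γ ≤ wMorreyTerm p q y m N γ :=
  mul_le_mul_right (ENNReal.rpow_le_rpow (by exact_mod_cast h) (by positivity)) _

theorem weakCard_zero_radius_of_lt {x : ℤ → ℂ} {k : ℤ} {γ : ℝ≥0} (hγ : γ < ‖x k‖₊) :
    weakCard x k 0 γ = 1 := by
  classical
  have hS : S k 0 = {k} := by simp [S]
  simp only [weakCard, hS, Finset.filter_singleton, if_pos hγ, Finset.card_singleton]

theorem enorm_apply_le_wMorreyNorm (x : ℤ → ℂ) (k : ℤ) : ‖x k‖ₑ ≤ wMorreyNorm p q x := by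
  rw [enorm_eq_nnnorm]
  refine ENNReal.le_of_forall_nnreal_lt fun γ hγ => ?_
  rcases eq_zero_or_pos γ with rfl | hγ₀
  · exact zero_le
  have hterm : wMorreyTerm p q x k 0 γ = γ := by
    simp [wMorreyTerm, weakCard_zero_radius_of_lt (ENNReal.coe_lt_coe.mp hγ)]
  exact hterm ▸ wMorreyTerm_le_wMorreyNorm x k 0 hγ₀

theorem weakCard_sub_le (u v : ℤ → ℂ) (m : ℤ) (N : ℕ) (γ : ℝ≥0) :
    weakCard (u - v) m N γ ≤ weakCard u m N (γ / 2) + weakCard v m N (γ / 2) := by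
  classical
  refine (Finset.card_le_card fun k hk => ?_).trans (Finset.card_union_le _ _)
  simp only [Finset.mem_filter, Finset.mem_union, Pi.sub_apply] at hk ⊢
  by_contra! h
  have hle : ‖u k - v k‖₊ ≤ γ :=
    calc ‖u k - v k‖₊ ≤ ‖u k‖₊ + ‖v k‖₊ := nnnorm_sub_le _ _
      _ ≤ γ / 2 + γ / 2 := add_le_add (h.1 hk.1) (h.2 hk.1)
      _ = γ := add_halves γ
  exact hle.not_gt hk.2

theorem wMorreyNorm_sub_le (hp : 1 ≤ p) (u v : ℤ → ℂ) :
    wMorreyNorm p q (u - v) ≤ 2 * (wMorreyNorm p q u + wMorreyNorm p q v) := by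
  have hp₀ : 0 ≤ 1 / p := by positivity
  have hp₁ : 1 / p ≤ 1 := (div_le_one (by positivity)).mpr hp
  refine iSup_le fun m => iSup_le fun N => iSup_le fun γ => iSup_le fun hγ => ?_
  set c : ℝ≥0∞ := (2 * (N : ℝ≥0∞) + 1) ^ (1 / q - 1 / p)
  set A : ℝ≥0∞ := (weakCard u m N (γ / 2) : ℝ≥0∞)
  set B : ℝ≥0∞ := (weakCard v m N (γ / 2) : ℝ≥0∞)
  have hcard : (weakCard (u - v) m N γ : ℝ≥0∞) ^ (1 / p) ≤ A ^ (1 / p) + B ^ (1 / p) :=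
    calc (weakCard (u - v) m N γ : ℝ≥0∞) ^ (1 / p) ≤ (A + B) ^ (1 / p) :=
          ENNReal.rpow_le_rpow (by unfold A B; exact_mod_cast weakCard_sub_le u v m N γ) hp₀
      _ ≤ A ^ (1 / p) + B ^ (1 / p) := ENNReal.rpow_add_le_add_rpow A B hp₀ hp₁
  have hγ₂ : (γ : ℝ≥0∞) = 2 * ((γ / 2 : ℝ≥0) : ℝ≥0∞) := by
    rw [ENNReal.coe_div two_ne_zero, ENNReal.coe_ofNat, ENNReal.mul_div_cancel two_ne_zero]
    exact ENNReal.ofNat_ne_top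
  calc wMorreyTerm p q (u - v) m N γ
      ≤ c * γ * (A ^ (1 / p) + B ^ (1 / p)) := mul_le_mul_right hcard _
    _ = 2 * wMorreyTerm p q u m N (γ / 2) + 2 * wMorreyTerm p q v m N (γ / 2) := by
      rw [hγ₂]; simp only [wMorreyTerm, c, A, B]; ring
    _ ≤ 2 * (wMorreyNorm p q u + wMorreyNorm p q v) := by
      rw [mul_add]
      gcongr <;> exact wMorreyTerm_le_wMorreyNorm _ m N (half_pos hγ)

theorem wMorreyNorm_le_of_tendsto (hp : 0 ≤ p) {Y : ℕ → ℤ → ℂ} {y : ℤ → ℂ} {C : ℝ≥0∞}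
    (hY : ∀ k, Tendsto (fun n => Y n k) atTop (𝓝 (y k)))
    (hC : ∀ᶠ n in atTop, wMorreyNorm p q (Y n) ≤ C) :
    wMorreyNorm p q y ≤ C := by
  classical
  refine iSup_le fun m => iSup_le fun N => iSup_le fun γ => iSup_le fun hγ => ?_
  have hcard : ∀ᶠ n in atTop, weakCard y m N γ ≤ weakCard (Y n) m N γ := by
    have hpt : ∀ᶠ n in atTop, ∀ k ∈ (S m N).filter (fun k => γ < ‖y k‖₊), γ < ‖Y n k‖₊ :=
      (Finset.eventually_all _).mpr fun k hk =>
        (hY k).nnnorm.eventually_const_lt (Finset.mem_filter.mp hk).2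
    filter_upwards [hpt] with n hn
    exact Finset.card_le_card fun k hk =>
      Finset.mem_filter.mpr ⟨(Finset.mem_filter.mp hk).1, hn k hk⟩
  obtain ⟨n, hn, hnC⟩ := (hcard.and hC).exists
  exact (wMorreyTerm_mono_of_weakCard_le hp hn).trans
    ((wMorreyTerm_le_wMorreyNorm _ m N hγ).trans hnC)

end WeakMorrey

theorem stmt9_general (p q : ℝ) (hp : 1 ≤ p) (X : ℕ → ℤ → ℂ)
    (hmem : ∀ n : ℕ, wMorreyNorm p q (X n) < ⊤)
    (hcauchy : ∀ ε : ℝ, 0 < ε → ∃ n₀ : ℕ, ∀ i j : ℕ, n₀ ≤ i → n₀ ≤ j →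
      wMorreyNorm p q (X i - X j) < ENNReal.ofReal ε) :
    ∃ x : ℤ → ℂ, wMorreyNorm p q x < ⊤ ∧
      ∀ ε : ℝ, 0 < ε → ∃ n₀ : ℕ, ∀ n : ℕ, n₀ ≤ n →
        wMorreyNorm p q (X n - x) < ENNReal.ofReal ε := by
  have hpt : ∀ k, CauchySeq fun n => X n k := fun k =>
    Metric.cauchySeq_iff.mpr fun ε hε => (hcauchy ε hε).imp fun n₀ hn₀ i hi j hj =>
      edist_lt_ofReal.mp <| (edist_eq_enorm_sub (X i k) (X j k)).trans_le
        (enorm_apply_le_wMorreyNorm (X i - X j) k) |>.trans_lt (hn₀ i j hi hj)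
  choose x hx using fun k => cauchySeq_tendsto_of_complete (hpt k)
  have hconv : ∀ ε : ℝ, 0 < ε → ∃ n₀ : ℕ, ∀ n : ℕ, n₀ ≤ n →
      wMorreyNorm p q (X n - x) < ENNReal.ofReal ε := by
    intro ε hε
    obtain ⟨n₀, hn₀⟩ := hcauchy (ε / 2) (half_pos hε)
    refine ⟨n₀, fun n hn => ?_⟩
    have hle : wMorreyNorm p q (X n - x) ≤ ENNReal.ofReal (ε / 2) :=
      wMorreyNorm_le_of_tendsto (zero_le_one.trans hp) (fun k => (hx k).const_sub (X n k))
        ((eventually_ge_atTop n₀).mono fun j hj => (hn₀ n j hn hj).le)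
    exact hle.trans_lt ((ENNReal.ofReal_lt_ofReal_iff hε).mpr (half_lt_self hε))
  refine ⟨x, ?_, hconv⟩
  obtain ⟨n₀, hn₀⟩ := hconv 1 one_pos
  calc wMorreyNorm p q x = wMorreyNorm p q (X n₀ - (X n₀ - x)) := by rw [sub_sub_cancel]
    _ ≤ 2 * (wMorreyNorm p q (X n₀) + wMorreyNorm p q (X n₀ - x)) := wMorreyNorm_sub_le hp _ _
    _ < ⊤ := ENNReal.mul_lt_top (by simp)
      (ENNReal.add_lt_top.mpr ⟨hmem n₀, (hn₀ n₀ le_rfl).trans ENNReal.ofReal_lt_top⟩)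

theorem stmt9 (p q : ℝ) (hp : 1 ≤ p) (hpq : p ≤ q) (X : ℕ → ℤ → ℂ)
    (hmem : ∀ n : ℕ, wMorreyNorm p q (X n) < ⊤)
    (hcauchy : ∀ ε : ℝ, 0 < ε → ∃ n₀ : ℕ, ∀ i j : ℕ, n₀ ≤ i → n₀ ≤ j →
      wMorreyNorm p q (X i - X j) < ENNReal.ofReal ε) :
    ∃ x : ℤ → ℂ, wMorreyNorm p q x < ⊤ ∧
      ∀ ε : ℝ, 0 < ε → ∃ n₀ : ℕ, ∀ n : ℕ, n₀ ≤ n →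
        wMorreyNorm p q (X n - x) < ENNReal.ofReal ε :=
  stmt9_general p q hp X hmem hcauchy
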